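/- Let a > 0 and n be a positive integer, let L_Φ = a·n·(2n−1)·2^{2n−2} be the Lipschitz constant of the flux Φ_{a,n} restricted to [0,2], and let W̃ = (w̃_{iℓ}) be an N×N matrix with nonnegative entries and positive diagonal. Suppose 0 < v^k_i < 1 for all 1 ≤ i ≤ N and that the time step size satisfies 0 < τ < 1 / (2·L_Φ·max_{1≤i≤N} Σ_{ℓ=1}^N w̃_{iℓ}). Then the explicit scheme v^{k+1}_i = v^k_i + τ·[ Σ_{ℓ : v^k_ℓ ≠ v^k_i} w̃_{iℓ}·(Φ_{a,n}(v^k_ℓ − v^k_i) − Φ_{a,n}(v^k_ℓ + v^k_i)) − Σ_{ℓ : v^k_ℓ = v^k_i} w̃_{iℓ}·Φ_{a,n}(2 v^k_i) ] satisfies 0 < v^{k+1}_i < 1 for all 1 ≤ i ≤ N. -/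

import Mathlib

open scoped Classical

/-- Flux `Φ_{a,n}(s) = a·n·(s−1)^(2n−1)` for `s ≥ 0`, extended by
`Φ_{a,n}(s) = a·n·(s+1)^(2n−1)` for `s < 0`. -/
noncomputable def flux (a : ℝ) (n : ℕ) (s : ℝ) : ℝ :=
  if 0 ≤ s then a * n * (s - 1) ^ (2 * n - 1) else a * n * (s + 1) ^ (2 * n - 1)

/-- Lipschitz constant `L_Φ = a·n·(2n−1)·2^(2n−2)` of the flux `Φ_{a,n}` on `[0,2]`. -/
noncomputable def LPhi (a : ℝ) (n : ℕ) : ℝ :=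
  a * n * ((2 * n - 1 : ℕ) : ℝ) * (2 : ℝ) ^ (2 * n - 2)

/-!
Write `L = LPhi a n`. On `[0,2]` the flux is the increasing polynomial `a·n·(s-1)^(2n-1)`, whose
slope is at most `a·n·(2n-1) ≤ L`; on `[-2,0)` it is the 2-shift of that polynomial. Hence the
contribution of a neighbour `x ∈ [0,1]` to the update of `y ∈ [0,1]` is a difference `Φ(v) - Φ(u)`
with `0 ≤ u, v ≤ 2` (for `x = y` write `-Φ(2y) = Φ(1) - Φ(2y)`), where `|v - u| ≤ 2y` if it is
negative and `|v - u| ≤ 2(1-y)` if it is positive. Summing with the weights, one explicit step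
moves `y` down by at most `2τLMy < y` and up by at most `2τLM(1-y) < 1-y`, where `M` bounds the
row sums of the weights.
-/

open Set

/-- The summand of the scheme for the pair `x = vᵏₗ`, `y = vᵏᵢ`. -/
noncomputable def fluxTerm (a : ℝ) (n : ℕ) (x y : ℝ) : ℝ :=
  if x = y then -flux a n (2 * y) else flux a n (x - y) - flux a n (x + y)

section Flux

variable {a : ℝ} {n : ℕ}

lemma flux_of_nonneg {s : ℝ} (hs : 0 ≤ s) : flux a n s = a * n * (s - 1) ^ (2 * n - 1) :=
  if_pos hs

lemma flux_of_neg {s : ℝ} (hs2 : -2 ≤ s) (hs : s < 0) : flux a n s = flux a n (s + 2) := by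
  rw [flux, if_neg hs.not_ge, flux_of_nonneg (by linarith)]
  ring_nf

lemma flux_one (hn : 0 < n) : flux a n 1 = 0 := by
  rw [flux_of_nonneg zero_le_one, sub_self, zero_pow (by omega), mul_zero]

lemma LPhi_nonneg (ha : 0 ≤ a) : 0 ≤ LPhi a n := by
  unfold LPhi
  positivity

lemma flux_sub_flux_mem_Icc (ha : 0 ≤ a) (hn : 0 < n) {u v : ℝ} (hu : 0 ≤ u) (huv : u ≤ v)
    (hv : v ≤ 2) : flux a n v - flux a n u ∈ Icc 0 (LPhi a n * (v - u)) := by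
  set m := 2 * n - 1
  have hm : Odd m := ⟨n - 1, by omega⟩
  rw [flux_of_nonneg hu, flux_of_nonneg (hu.trans huv), ← mul_sub]
  have han : 0 ≤ a * n := by positivity
  have hslope : a * n * m ≤ LPhi a n :=
    le_mul_of_one_le_right (by positivity) (one_le_pow₀ one_le_two)
  have hmono : (u - 1) ^ m ≤ (v - 1) ^ m := hm.pow_le_pow.mpr (by linarith)
  have hlip : (v - 1) ^ m - (u - 1) ^ m ≤ m * (v - u) := by
    have hmax : max |v - 1| |u - 1| ≤ 1 :=
      max_le (abs_le.mpr ⟨by linarith, by linarith⟩) (abs_le.mpr ⟨by linarith, by linarith⟩)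
    calc (v - 1) ^ m - (u - 1) ^ m ≤ |(v - 1) ^ m - (u - 1) ^ m| := le_abs_self _
      _ ≤ |v - 1 - (u - 1)| * m * max |v - 1| |u - 1| ^ (m - 1) := abs_pow_sub_pow_le ..
      _ ≤ |v - 1 - (u - 1)| * m * 1 := by gcongr; exact pow_le_one₀ (by positivity) hmax
      _ = m * (v - u) := by rw [sub_sub_sub_cancel_right, abs_of_nonneg (by linarith)]; ring
  refine ⟨mul_nonneg han (by linarith), ?_⟩
  calc a * n * ((v - 1) ^ m - (u - 1) ^ m) ≤ a * n * (m * (v - u)) := by gcongr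
    _ = a * n * m * (v - u) := by ring
    _ ≤ LPhi a n * (v - u) :=
      mul_le_mul_of_nonneg_right hslope (by linarith)

lemma fluxTerm_mem_Icc (ha : 0 ≤ a) (hn : 0 < n) {x y : ℝ} (hx : x ∈ Icc 0 1)
    (hy : y ∈ Icc 0 1) :
    fluxTerm a n x y ∈ Icc (-(2 * LPhi a n * y)) (2 * LPhi a n * (1 - y)) := by
  obtain ⟨hx0, hx1⟩ := hx
  obtain ⟨hy0, hy1⟩ := hy
  have hL := LPhi_nonneg (n := n) ha
  rcases lt_trichotomy x y with hxy | rfl | hxy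
  · rw [fluxTerm, if_neg hxy.ne, flux_of_neg (by linarith) (by linarith)]
    obtain ⟨h0, h1⟩ := flux_sub_flux_mem_Icc ha hn (u := x + y) (v := x - y + 2)
      (by linarith) (by linarith) (by linarith)
    constructor <;> nlinarith
  · rw [fluxTerm, if_pos rfl]
    have h1 : flux a n 1 = 0 := flux_one hn
    rcases le_total (2 * x) 1 with hle | hle
    · obtain ⟨h0, h2⟩ := flux_sub_flux_mem_Icc ha hn (by linarith) hle one_le_two
      constructor <;> nlinarith
    · obtain ⟨h0, h2⟩ := flux_sub_flux_mem_Icc ha hn zero_le_one hle (by linarith)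
      constructor <;> nlinarith
  · rw [fluxTerm, if_neg hxy.ne']
    obtain ⟨h0, h1⟩ := flux_sub_flux_mem_Icc ha hn (u := x - y) (v := x + y)
      (by linarith) (by linarith) (by linarith)
    constructor <;> nlinarith

lemma sum_mul_fluxTerm_eq {ι : Type*} (s : Finset ι) (w v : ι → ℝ) (y : ℝ) :
    ∑ l ∈ s, w l * fluxTerm a n (v l) y =
      (∑ l ∈ s.filter (fun l => v l ≠ y), w l * (flux a n (v l - y) - flux a n (v l + y))) -
        ∑ l ∈ s.filter (fun l => v l = y), w l * flux a n (2 * y) := by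
  simp only [fluxTerm, mul_ite, mul_neg]
  rw [Finset.sum_ite, Finset.sum_neg_distrib]
  ring

end Flux

lemma add_mul_sum_mem_Ioo {ι : Type*} (s : Finset ι) {w g : ι → ℝ} {y K M τ : ℝ}
    (hy : y ∈ Ioo 0 1) (hw : ∀ l ∈ s, 0 ≤ w l)
    (hg : ∀ l ∈ s, g l ∈ Icc (-(K * y)) (K * (1 - y)))
    (hK : 0 ≤ K) (hτ : 0 ≤ τ) (hsum : ∑ l ∈ s, w l ≤ M) (hτKM : τ * (K * M) < 1) :
    y + τ * ∑ l ∈ s, w l * g l ∈ Ioo 0 1 := by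
  obtain ⟨hy0, hy1⟩ := hy
  set S := ∑ l ∈ s, w l
  have hS : 0 ≤ S := Finset.sum_nonneg hw
  have hθ : τ * (K * S) < 1 := lt_of_le_of_lt (by gcongr) hτKM
  have hlow : S * -(K * y) ≤ ∑ l ∈ s, w l * g l := by
    rw [Finset.sum_mul]
    exact Finset.sum_le_sum fun l hl => mul_le_mul_of_nonneg_left (hg l hl).1 (hw l hl)
  have hup : ∑ l ∈ s, w l * g l ≤ S * (K * (1 - y)) := by
    rw [Finset.sum_mul]
    exact Finset.sum_le_sum fun l hl => mul_le_mul_of_nonneg_left (hg l hl).2 (hw l hl)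
  constructor
  · calc 0 < (1 - τ * (K * S)) * y := mul_pos (by linarith) hy0
      _ = y + τ * (S * -(K * y)) := by ring
      _ ≤ y + τ * ∑ l ∈ s, w l * g l := by gcongr
  · calc y + τ * ∑ l ∈ s, w l * g l ≤ y + τ * (S * (K * (1 - y))) := by gcongr
      _ = 1 - (1 - τ * (K * S)) * (1 - y) := by ring
      _ < 1 := sub_lt_self _ (mul_pos (by linarith) (by linarith))

theorem stmt14_general (a : ℝ) (ha : 0 < a) (n : ℕ) (hn : 0 < n) (N : ℕ)
    (W : Matrix (Fin N) (Fin N) ℝ) (hW : ∀ i l, 0 ≤ W i l)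
    (τ : ℝ) (vk vk1 : Fin N → ℝ)
    (hv : ∀ i, vk i ∈ Set.Ioo (0 : ℝ) 1)
    (hτ0 : 0 < τ) (hτ : τ < 1 / (2 * LPhi a n * ⨆ i, ∑ l, W i l))
    (hscheme : ∀ i, vk1 i = vk i + τ *
      ((∑ l ∈ Finset.univ.filter (fun l => vk l ≠ vk i),
          W i l * (flux a n (vk l - vk i) - flux a n (vk l + vk i))) -
        ∑ l ∈ Finset.univ.filter (fun l => vk l = vk i),
          W i l * flux a n (2 * vk i))) :
    ∀ i, vk1 i ∈ Set.Ioo (0 : ℝ) 1 := by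
  intro i
  have hLM : 0 < 2 * LPhi a n * ⨆ j, ∑ l, W j l := one_div_pos.mp (hτ0.trans hτ)
  have hL : 0 ≤ 2 * LPhi a n := mul_nonneg zero_le_two (LPhi_nonneg ha.le)
  rw [hscheme i, ← sum_mul_fluxTerm_eq]
  exact add_mul_sum_mem_Ioo _ (hv i) (fun l _ => hW i l)
    (fun l _ => fluxTerm_mem_Icc ha.le hn (Ioo_subset_Icc_self (hv l))
      (Ioo_subset_Icc_self (hv i)))
    hL hτ0.le (Finite.le_ciSup (fun j => ∑ l, W j l) i) ((lt_div_iff₀ hLM).mp hτ)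

/-- Avoidance of range interval boundaries for the explicit scheme: if all
`vᵏᵢ ∈ (0,1)` and `0 < τ < 1/(2·L_Φ·maxᵢ Σₗ w̃ᵢₗ)`, then the explicit time step keeps all
values in `(0,1)`. -/
theorem stmt14 (a : ℝ) (ha : 0 < a) (n : ℕ) (hn : 0 < n) (N : ℕ) (hN : 1 ≤ N)
    (W : Matrix (Fin N) (Fin N) ℝ) (hW : ∀ i l, 0 ≤ W i l) (hdiag : ∀ i, 0 < W i i)
    (τ : ℝ) (vk vk1 : Fin N → ℝ)
    (hv : ∀ i, vk i ∈ Set.Ioo (0 : ℝ) 1)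
    (hτ0 : 0 < τ) (hτ : τ < 1 / (2 * LPhi a n * ⨆ i, ∑ l, W i l))
    (hscheme : ∀ i, vk1 i = vk i + τ *
      ((∑ l ∈ Finset.univ.filter (fun l => vk l ≠ vk i),
          W i l * (flux a n (vk l - vk i) - flux a n (vk l + vk i))) -
        ∑ l ∈ Finset.univ.filter (fun l => vk l = vk i),
          W i l * flux a n (2 * vk i))) :
    ∀ i, vk1 i ∈ Set.Ioo (0 : ℝ) 1 :=
  stmt14_general a ha n hn N W hW τ vk vk1 hv hτ0 hτ hscheme
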